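/- For all integers L ≥ 1 and M ≥ L+1 and every real polynomial p(x) = Σ_{j=0}^{L} w_j x^j of degree at most L, the coefficient vector w = (w_0,…,w_L) satisfies ‖w‖₂ ≤ L²·2^{7L}·(2L+1)·(eM/(M+L))^{L+1/2} · max_{a ∈ {1,…,M}} |p(a/M)|. In particular, max_{0≤j≤L} |w_j| ≤ max_{x ∈ {1/M, 2/M, …, 1}} |p(x)| · exp(O(L)) whenever M ≥ L+1. -/

import Mathlib

/-!
Take `q = ⌊M / (L + 1)⌋`. The `L + 1` nodes `(i + 1) q / M`, `i ≤ L`, are grid points in `(0, 1]`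
with consecutive gaps `q / M ≥ 1 / (2 (L + 1))`. Lagrange interpolation at these nodes expresses
each coefficient of `p` through the values of `p` at the nodes, weighted by coefficients of the
Lagrange basis polynomials. As the nodes lie in `[-1, 1]`, the coefficients of `∏ (X - v_j)` are
at most `2 ^ L`, so the `i`-th weight is at most `2 ^ L (M / q) ^ L / (i! (L - i)!)`; summing over
`i` gives `|w_k| ≤ (8 (L + 1)) ^ L / L! · max`, and `(L + 1) ^ L / L! ≤ e ^ (L + 1) ≤ 8 ^ L`. Hence
`‖w‖₂ ≤ √(L + 1) · 64 ^ L · max ≤ 2 ^ (7 L) · max`. The remaining factors of the bound are `≥ 1`.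
-/

open Finset Polynomial
open scoped Nat

theorem abs_coeff_prod_X_sub_C_le {ι : Type*} (s : Finset ι) (a : ι → ℝ)
    (ha : ∀ j ∈ s, |a j| ≤ 1) (k : ℕ) :
    |(∏ j ∈ s, (X - C (a j))).coeff k| ≤ 2 ^ #s := by
  induction s using Finset.cons_induction generalizing k with
  | empty => rw [prod_empty, coeff_one]; split_ifs <;> norm_num
  | cons i s hi ih =>
    have ih := fun k ↦ ih (fun j hj ↦ ha j (mem_cons_of_mem hj)) k
    have hai : |a i| ≤ 1 := ha i (mem_cons_self i s)
    set q := ∏ j ∈ s, (X - C (a j))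
    rw [prod_cons, mul_comm, card_cons, pow_succ, mul_two]
    cases k with
    | zero =>
      rw [mul_coeff_zero, coeff_sub, coeff_X_zero, coeff_C_zero, zero_sub, abs_mul, abs_neg]
      have := (mul_le_of_le_one_right (abs_nonneg _) hai).trans (ih 0)
      linarith [pow_pos (two_pos : (0 : ℝ) < 2) #s]
    | succ k =>
      rw [coeff_mul_X_sub_C]
      calc |q.coeff k - q.coeff (k + 1) * a i|
          ≤ |q.coeff k| + |q.coeff (k + 1)| * |a i| := by rw [← abs_mul]; exact abs_sub _ _
        _ ≤ 2 ^ #s + 2 ^ #s := by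
          gcongr
          · exact ih k
          · exact (mul_le_of_le_one_right (abs_nonneg _) hai).trans (ih _)

section Lagrange

variable {ι : Type*} [DecidableEq ι]

theorem abs_coeff_basis_le (s : Finset ι) (v : ι → ℝ) (i : ι)
    (hv : ∀ j ∈ s.erase i, |v j| ≤ 1) (k : ℕ) :
    |(Lagrange.basis s v i).coeff k| ≤ 2 ^ #(s.erase i) / ∏ j ∈ s.erase i, |v i - v j| := by
  have hbasis : Lagrange.basis s v i
      = C (∏ j ∈ s.erase i, (v i - v j))⁻¹ * ∏ j ∈ s.erase i, (X - C (v j)) := by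
    simp only [Lagrange.basis, Lagrange.basisDivisor, prod_mul_distrib, ← map_prod,
      prod_inv_distrib]
  rw [hbasis, coeff_C_mul, abs_mul, abs_inv, abs_prod, div_eq_mul_inv, mul_comm]
  gcongr
  exact abs_coeff_prod_X_sub_C_le _ _ hv k

theorem abs_coeff_le_of_degree_lt {s : Finset ι} {v : ι → ℝ} (hvs : Set.InjOn v s)
    (hv : ∀ i ∈ s, |v i| ≤ 1) {p : ℝ[X]} (hp : p.degree < #s) (k : ℕ) :
    |p.coeff k| ≤
      ∑ i ∈ s, |p.eval (v i)| * (2 ^ #(s.erase i) / ∏ j ∈ s.erase i, |v i - v j|) := by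
  nth_rewrite 1 [Lagrange.eq_interpolate hvs hp]
  rw [Lagrange.interpolate_apply, finsetSum_coeff]
  refine (abs_sum_le_sum_abs _ _).trans (sum_le_sum fun i _ ↦ ?_)
  rw [coeff_C_mul, abs_mul]
  gcongr
  exact abs_coeff_basis_le s v i (fun j hj ↦ hv j (mem_of_mem_erase hj)) k

end Lagrange

theorem prod_erase_range_abs_natCast_sub {n i : ℕ} (hi : i ≤ n) :
    ∏ j ∈ (range (n + 1)).erase i, |(i : ℝ) - j| = i ! * (n - i)! := by
  have hsplit : (range (n + 1)).erase i = range i ∪ Ico (i + 1) (n + 1) := by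
    ext; simp only [mem_erase, mem_range, mem_union, mem_Ico]; omega
  have hdisj : Disjoint (range i) (Ico (i + 1) (n + 1)) :=
    disjoint_left.2 fun j h h' ↦ by simp only [mem_range, mem_Ico] at h h'; omega
  rw [hsplit, prod_union hdisj]
  congr 1
  · rw [← prod_range_add_one_eq_factorial, ← prod_range_reflect, Nat.cast_prod]
    refine prod_congr rfl fun j hj ↦ ?_
    have hj : j < i := mem_range.1 hj
    have hdiff : (i : ℝ) - ↑(i - 1 - j) = ↑(j + 1) := by
      rw [sub_eq_iff_eq_add]; norm_cast; omega
    rw [hdiff, abs_of_nonneg (Nat.cast_nonneg _)]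
  · rw [prod_Ico_eq_prod_range, ← prod_range_add_one_eq_factorial, Nat.cast_prod,
      show n + 1 - (i + 1) = n - i by omega]
    refine prod_congr rfl fun j _ ↦ ?_
    rw [abs_sub_comm, abs_of_nonneg (sub_nonneg.2 (by norm_cast; omega))]
    push_cast; ring

theorem sum_range_inv_factorial_mul_factorial (n : ℕ) :
    ∑ i ∈ range (n + 1), ((i ! : ℝ) * (n - i)!)⁻¹ = 2 ^ n / n ! := by
  have hterm : ∀ i ∈ range (n + 1), ((i ! : ℝ) * (n - i)!)⁻¹ = n.choose i / n ! := by
    intro i hi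
    rw [Nat.cast_choose ℝ (Nat.lt_succ_iff.1 (mem_range.1 hi))]
    field_simp
  rw [sum_congr rfl hterm, ← sum_div, ← Nat.cast_sum, Nat.sum_range_choose]
  push_cast; rfl

theorem abs_coeff_le_of_abs_eval_equispaced_le {p : ℝ[X]} {n : ℕ} (hp : p.degree ≤ n) {h S : ℝ}
    (h0 : 0 < h) (h1 : (n + 1) * h ≤ 1) (hS : ∀ i ≤ n, |p.eval ((i + 1) * h)| ≤ S) (k : ℕ) :
    |p.coeff k| ≤ S * (4 / h) ^ n / n ! := by
  set v : ℕ → ℝ := fun i ↦ (i + 1) * h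
  have hinj : Set.InjOn v (range (n + 1)) := fun i _ j _ hij ↦ by
    simpa [v, h0.ne'] using hij
  have hv : ∀ i ∈ range (n + 1), |v i| ≤ 1 := fun i hi ↦ by
    have : (i : ℝ) + 1 ≤ n + 1 := by exact_mod_cast mem_range.1 hi
    rw [abs_of_nonneg (by positivity)]
    nlinarith
  have hcard : ∀ i ∈ range (n + 1), #((range (n + 1)).erase i) = n := fun i hi ↦ by
    rw [card_erase_of_mem hi, card_range, Nat.add_sub_cancel]
  have hprod : ∀ i ∈ range (n + 1),
      ∏ j ∈ (range (n + 1)).erase i, |v i - v j| = i ! * (n - i)! * h ^ n := fun i hi ↦ by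
    have hdiff : ∀ j, |v i - v j| = |(i : ℝ) - j| * h := fun j ↦ by
      rw [show v i - v j = (i - j) * h by simp only [v]; ring, abs_mul, abs_of_pos h0]
    simp only [hdiff, prod_mul_distrib, prod_const, hcard i hi,
      prod_erase_range_abs_natCast_sub (Nat.lt_succ_iff.1 (mem_range.1 hi))]
  have hdeg : p.degree < #(range (n + 1)) := by
    rw [card_range]; exact hp.trans_lt (by exact_mod_cast n.lt_succ_self)
  calc |p.coeff k|
      ≤ ∑ i ∈ range (n + 1), |p.eval (v i)| * (2 ^ #((range (n + 1)).erase i)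
          / ∏ j ∈ (range (n + 1)).erase i, |v i - v j|) := abs_coeff_le_of_degree_lt hinj hv hdeg k
    _ ≤ ∑ i ∈ range (n + 1), S * (2 ^ n / (i ! * (n - i)! * h ^ n)) := by
      refine sum_le_sum fun i hi ↦ ?_
      rw [hcard i hi, hprod i hi]
      gcongr
      exact hS i (Nat.lt_succ_iff.1 (mem_range.1 hi))
    _ = S * (2 ^ n / h ^ n) * ∑ i ∈ range (n + 1), ((i ! : ℝ) * (n - i)!)⁻¹ := by
      rw [mul_sum]; refine sum_congr rfl fun i _ ↦ ?_; field_simp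
    _ = S * (4 / h) ^ n / n ! := by
      rw [sum_range_inv_factorial_mul_factorial, div_pow, show (4 : ℝ) = 2 * 2 by norm_num, mul_pow]
      ring

theorem add_one_pow_div_factorial_le_exp (n : ℕ) : ((n : ℝ) + 1) ^ n / n ! ≤ Real.exp (n + 1) := by
  have := Real.pow_div_factorial_le_exp (x := (n : ℝ) + 1) (by positivity) (n + 1)
  rw [div_le_iff₀ (by positivity)] at this ⊢
  rw [pow_succ, Nat.factorial_succ, Nat.cast_mul, Nat.cast_succ] at this
  refine le_of_mul_le_mul_right ?_ (by positivity : (0 : ℝ) < n + 1)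
  linarith

theorem exp_add_one_le_eight_pow {n : ℕ} (hn : 1 ≤ n) : Real.exp (n + 1) ≤ 8 ^ n := by
  have he : Real.exp 2 ≤ 8 := by
    rw [show (2 : ℝ) = 1 + 1 by norm_num, Real.exp_add]
    nlinarith [Real.exp_one_lt_d9, Real.exp_pos 1]
  have hn' : (1 : ℝ) ≤ n := Nat.one_le_cast.2 hn
  calc Real.exp (n + 1) ≤ Real.exp (2 * n) := Real.exp_le_exp.2 (by linarith)
    _ = Real.exp 2 ^ n := by rw [← Real.exp_nat_mul, mul_comm]
    _ ≤ 8 ^ n := by gcongr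

theorem abs_coeff_le_of_abs_eval_grid_le {p : ℝ[X]} {L M : ℕ} (hL : 1 ≤ L) (hM : L + 1 ≤ M)
    (hp : p.degree ≤ L) {S : ℝ} (hS : ∀ a < M, |p.eval ((a + 1 : ℝ) / M)| ≤ S) (k : ℕ) :
    |p.coeff k| ≤ 64 ^ L * S := by
  obtain ⟨q, hq0, hqM, hMq⟩ : ∃ q : ℕ, 0 < q ∧ (L + 1) * q ≤ M ∧ M ≤ 2 * (L + 1) * q := by
    have hq0 := Nat.div_pos hM L.succ_pos
    have hlt := Nat.lt_mul_div_succ M L.succ_pos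
    exact ⟨M / (L + 1), hq0, Nat.mul_div_le M (L + 1), by nlinarith⟩
  have hM0 : (0 : ℝ) < M := by exact_mod_cast (L.succ_pos.trans_le hM)
  have hq0' : (0 : ℝ) < q := by exact_mod_cast hq0
  have hqM' : ((L : ℝ) + 1) * q ≤ M := by exact_mod_cast hqM
  have hMq' : (M : ℝ) ≤ 2 * (L + 1) * q := by exact_mod_cast hMq
  -- the nodes `(i + 1) q / M` for `i ≤ L` are grid points `(a + 1) / M` with `a = (i + 1) q - 1`
  have hnodes : ∀ i ≤ L, |p.eval ((i + 1 : ℝ) * (q / M))| ≤ S := fun i hi ↦ by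
    have hiq : (i + 1) * q ≤ (L + 1) * q := Nat.mul_le_mul_right _ (by omega)
    have := hS ((i + 1) * q - 1) (by omega)
    rwa [Nat.cast_sub (by nlinarith), Nat.cast_mul, Nat.cast_one, sub_add_cancel, Nat.cast_succ,
      mul_div_assoc] at this
  have hcoeff := abs_coeff_le_of_abs_eval_equispaced_le hp (by positivity)
    (by rw [← mul_div_assoc, div_le_one hM0]; exact hqM') hnodes k
  have hS0 : 0 ≤ S := (abs_nonneg _).trans (hnodes 0 (Nat.zero_le _))
  calc |p.coeff k| ≤ S * (4 / (q / M)) ^ L / L ! := hcoeff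
    _ ≤ S * (8 * (L + 1)) ^ L / L ! := by
      gcongr
      rw [div_div_eq_mul_div, div_le_iff₀ hq0']; linarith
    _ = 8 ^ L * (((L : ℝ) + 1) ^ L / L !) * S := by rw [mul_pow]; ring
    _ ≤ 8 ^ L * 8 ^ L * S := by
      gcongr
      exact (add_one_pow_div_factorial_le_exp L).trans (exp_add_one_le_eight_pow hL)
    _ = 64 ^ L * S := by rw [← mul_pow]; norm_num

theorem sqrt_sum_sq_le_of_abs_le {ι : Type*} (s : Finset ι) {x : ι → ℝ} {B : ℝ}
    (hx : ∀ i ∈ s, |x i| ≤ B) : √(∑ i ∈ s, x i ^ 2) ≤ √(#s : ℝ) * B := by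
  rcases s.eq_empty_or_nonempty with rfl | ⟨i, hi⟩
  · simp
  have hB : 0 ≤ B := (abs_nonneg _).trans (hx i hi)
  calc √(∑ i ∈ s, x i ^ 2) ≤ √(∑ _i ∈ s, B ^ 2) :=
        Real.sqrt_le_sqrt (sum_le_sum fun i hi ↦ sq_le_sq.2 ((hx i hi).trans (le_abs_self B)))
    _ = √(#s : ℝ) * B := by
      rw [sum_const, nsmul_eq_mul, Real.sqrt_mul (Nat.cast_nonneg _), Real.sqrt_sq hB]

/-- For integers `L ≥ 1` and `M ≥ L+1` and every real polynomial
`p(x) = Σ_{j=0}^{L} w_j x^j` of degree at most `L`, the coefficient vector satisfies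
`‖w‖₂ ≤ L²·2^{7L}·(2L+1)·(eM/(M+L))^{L+1/2} · max_{a ∈ {1,…,M}} |p(a/M)|`. -/
theorem stmt5 (L M : ℕ) (hL : 1 ≤ L) (hM : L + 1 ≤ M) (w : Fin (L + 1) → ℝ) :
    Real.sqrt (∑ j : Fin (L + 1), w j ^ 2)
      ≤ (L : ℝ) ^ 2 * 2 ^ (7 * L) * (2 * L + 1) *
          ((Real.exp 1 * M) / ((M : ℝ) + L)) ^ ((L : ℝ) + 1 / 2) *
          (Finset.univ.sup'
            (Finset.univ_nonempty_iff.mpr ⟨⟨0, by omega⟩⟩)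
            (fun i : Fin M => |∑ j : Fin (L + 1), w j * ((i.1 + 1 : ℝ) / M) ^ (j.1 : ℕ)|)) := by
  obtain ⟨p, rfl⟩ := (degreeLTEquiv ℝ (L + 1)).surjective w
  set S := univ.sup' _ fun i : Fin M ↦
    |∑ j : Fin (L + 1), degreeLTEquiv ℝ (L + 1) p j * ((i.1 + 1 : ℝ) / M) ^ (j.1 : ℕ)|
  have hdeg : (p : ℝ[X]).degree ≤ L := Order.le_of_lt_succ (mem_degreeLT.1 p.2)
  have heval : ∀ a < M, |(p : ℝ[X]).eval ((a + 1 : ℝ) / M)| ≤ S := fun a ha ↦ by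
    rw [eval_eq_sum_degreeLTEquiv p.2, Subtype.coe_eta]
    exact le_sup' (fun i : Fin M ↦
      |∑ j : Fin (L + 1), degreeLTEquiv ℝ (L + 1) p j * ((i.1 + 1 : ℝ) / M) ^ (j.1 : ℕ)|)
      (mem_univ (⟨a, ha⟩ : Fin M))
  have hw : ∀ j ∈ univ, |degreeLTEquiv ℝ (L + 1) p j| ≤ 64 ^ L * S := fun j _ ↦
    abs_coeff_le_of_abs_eval_grid_le hL hM hdeg heval j
  have hS0 : 0 ≤ S := (abs_nonneg _).trans (heval 0 (by omega))
  have hsqrt : √((L : ℝ) + 1) ≤ 2 ^ L := Real.sqrt_le_iff.2 ⟨by positivity, by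
    rw [← pow_mul, pow_mul']
    exact_mod_cast Nat.lt_two_pow_self.trans_le (Nat.pow_le_pow_left (by norm_num) L)⟩
  have hR : 1 ≤ ((Real.exp 1 * M) / ((M : ℝ) + L)) ^ ((L : ℝ) + 1 / 2) := by
    refine Real.one_le_rpow ?_ (by positivity)
    rw [one_le_div (by positivity)]
    have : (L : ℝ) ≤ M := by exact_mod_cast (by omega : L ≤ M)
    nlinarith [Real.add_one_le_exp 1]
  calc √(∑ j, degreeLTEquiv ℝ (L + 1) p j ^ 2) ≤ √((L : ℝ) + 1) * (64 ^ L * S) := by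
        simpa using sqrt_sum_sq_le_of_abs_le univ hw
    _ ≤ 2 ^ L * (64 ^ L * S) := by gcongr
    _ = 1 * 2 ^ (7 * L) * 1 * 1 * S := by rw [← mul_assoc, ← mul_pow, pow_mul]; norm_num
    _ ≤ _ := by
      gcongr
      · exact_mod_cast Nat.one_le_pow _ _ hL
      · linarith [(Nat.one_le_cast (α := ℝ)).2 hL]
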